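/- arXiv:1902.02115 — 3 statements merged into one kernel-verified Lean document; each statement's English description precedes it below -/
import Mathlib

section
/- Let r,s ∈ {0,...,n} and let E_{r,s} = conj(A_0)⊗A_0⊗I⊗I + conj(A_1)⊗A_1⊗I⊗I + conj(A_0)⊗A_1⊗I⊗J_{+,s} + conj(A_1)⊗A_0⊗J_{+,r}⊗I + conj(A_1)⊗A_1⊗J_{+,r}⊗J_{+,s} act on C^2⊗C^2⊗C^{r+1}⊗C^{s+1}, where A_0 = σ_+, A_1 = diag(1,ω), ω = exp(2πi/n), and J_{+,r}, J_{+,s} are spin raising operators (strictly lower triangular in the standard basis). Then the spectrum of E_{r,s} is {1, ω, ω̄}, with eigenvalue 1 of algebraic multiplicity 2(r+1)(s+1), and eigenvalues ω and ω̄ each of algebraic multiplicity (r+1)(s+1). -/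
open Kronecker Polynomial

noncomputable def ω (n : ℕ) : ℂ := Complex.exp (2 * Real.pi * Complex.I / n)

noncomputable def A0 : Matrix (Fin 2) (Fin 2) ℂ := !![0, 0; 1, 0]

noncomputable def A1 (n : ℕ) : Matrix (Fin 2) (Fin 2) ℂ := !![1, 0; 0, ω n]

noncomputable def mconj (A : Matrix (Fin 2) (Fin 2) ℂ) : Matrix (Fin 2) (Fin 2) ℂ :=
  A.map (starRingEnd ℂ)

/-- The raising operator `J₊` of the spin-`r/2` irreducible representation of `su(2)`,
acting on `ℂ^{r+1}`: `J₊|k⟩ = √((k+1)(r-k)) |k+1⟩` (strictly lower triangular in the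
standard ordered basis). -/
noncomputable def Jplus (r : ℕ) : Matrix (Fin (r + 1)) (Fin (r + 1)) ℂ :=
  Matrix.of fun i j =>
    if (i : ℕ) = (j : ℕ) + 1 then (Real.sqrt (((j : ℕ) + 1) * (r - (j : ℕ))) : ℂ) else 0

/-- The combined transfer operator `E_{r,s}` of magnon states on
`ℂ²⊗ℂ²⊗ℂ^{r+1}⊗ℂ^{s+1}`. -/
noncomputable def Ers (n r s : ℕ) :
    Matrix (((Fin 2 × Fin 2) × Fin (r + 1)) × Fin (s + 1))
      (((Fin 2 × Fin 2) × Fin (r + 1)) × Fin (s + 1)) ℂ :=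
  (mconj A0 ⊗ₖ A0) ⊗ₖ (1 : Matrix (Fin (r + 1)) (Fin (r + 1)) ℂ) ⊗ₖ
      (1 : Matrix (Fin (s + 1)) (Fin (s + 1)) ℂ) +
    (mconj (A1 n) ⊗ₖ A1 n) ⊗ₖ (1 : Matrix (Fin (r + 1)) (Fin (r + 1)) ℂ) ⊗ₖ
      (1 : Matrix (Fin (s + 1)) (Fin (s + 1)) ℂ) +
    (mconj A0 ⊗ₖ A1 n) ⊗ₖ (1 : Matrix (Fin (r + 1)) (Fin (r + 1)) ℂ) ⊗ₖ Jplus s +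
    (mconj (A1 n) ⊗ₖ A0) ⊗ₖ Jplus r ⊗ₖ (1 : Matrix (Fin (s + 1)) (Fin (s + 1)) ℂ) +
    (mconj (A1 n) ⊗ₖ A1 n) ⊗ₖ Jplus r ⊗ₖ Jplus s

/-! Order the basis of `ℂ² ⊗ ℂ² ⊗ ℂ^{r+1} ⊗ ℂ^{s+1}` lexicographically, each factor in
reverse. `A₀`, `A₁`, `J₊` and `1` are all lower triangular, and a Kronecker product of
triangular factors is triangular for the lexicographic order, so `E_{r,s}` is triangular and its
characteristic polynomial is read off its diagonal. Only `conj A₁ ⊗ A₁ ⊗ 1 ⊗ 1` contributes to the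
diagonal, giving each of `1, ω, ω̄, ω̄ω = 1` with multiplicity `(r+1)(s+1)`. -/

open Matrix Function OrderDual

theorem Matrix.BlockTriangular.kronecker {R m n α β : Type*} [MulZeroClass R] [LT α] [LT β]
    {A : Matrix m m R} {B : Matrix n n R} {b₁ : m → α} {b₂ : n → β}
    (hA : A.BlockTriangular b₁) (hB : B.BlockTriangular b₂) :
    (A ⊗ₖ B).BlockTriangular fun i => toLex (b₁ i.1, b₂ i.2) := by
  rintro ⟨i₁, i₂⟩ ⟨j₁, j₂⟩ h
  rcases Prod.Lex.toLex_lt_toLex.1 h with h₁ | ⟨-, h₂⟩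
  · simp [hA h₁]
  · simp [hB h₂]

theorem Matrix.charpoly_of_blockTriangular_of_injective {R n α : Type*} [CommRing R]
    [Fintype n] [DecidableEq n] [LinearOrder α] {M : Matrix n n R} {b : n → α}
    (hb : Injective b) (h : M.BlockTriangular b) : M.charpoly = ∏ i, (X - C (M i i)) :=
  letI : LinearOrder n := LinearOrder.lift' b hb
  charpoly_of_isUpperTriangular M h

theorem Fintype.prod_comp_fst {α β M : Type*} [Fintype α] [Fintype β] [CommMonoid M]
    (f : α → M) : ∏ x : α × β, f x.1 = (∏ a, f a) ^ Fintype.card β := by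
  simp [Fintype.prod_prod_type, Finset.prod_pow]

theorem A0_isLowerTriangular : A0.IsLowerTriangular := by
  intro i j h
  rw [toDual_lt_toDual] at h
  fin_cases i <;> fin_cases j <;> simp_all [A0]

theorem A1_eq_diagonal (n : ℕ) : A1 n = diagonal ![1, ω n] := by
  ext i j
  fin_cases i <;> fin_cases j <;> rfl

theorem Jplus_isLowerTriangular (r : ℕ) : (Jplus r).IsLowerTriangular := by
  intro i j h
  rw [toDual_lt_toDual, Fin.lt_def] at h
  have : (i : ℕ) ≠ j + 1 := by omega
  simp [Jplus, this]

theorem conj_ω_mul_ω (n : ℕ) : starRingEnd ℂ (ω n) * ω n = 1 := by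
  rw [ω, ← Complex.exp_conj, ← Complex.exp_add]
  simp [map_ofNat, neg_div]

theorem Ers_blockTriangular (n r s : ℕ) :
    (Ers n r s).BlockTriangular fun x =>
      toLex (toLex (toLex (toDual x.1.1.1, toDual x.1.1.2), toDual x.1.2), toDual x.2) := by
  have hA0 := A0_isLowerTriangular
  have hA1 : (A1 n).IsLowerTriangular := A1_eq_diagonal n ▸ blockTriangular_diagonal _
  have hcA0 := hA0.map (starRingEnd ℂ)
  have hcA1 := hA1.map (starRingEnd ℂ)
  have hJr := Jplus_isLowerTriangular r
  have hJs := Jplus_isLowerTriangular s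
  have h1 : ∀ k, (1 : Matrix (Fin k) (Fin k) ℂ).IsLowerTriangular := fun _ => blockTriangular_one
  refine .add (.add (.add (.add ?_ ?_) ?_) ?_) ?_
  · exact ((hcA0.kronecker hA0).kronecker (h1 _)).kronecker (h1 _)
  · exact ((hcA1.kronecker hA1).kronecker (h1 _)).kronecker (h1 _)
  · exact ((hcA0.kronecker hA1).kronecker (h1 _)).kronecker hJs
  · exact ((hcA1.kronecker hA0).kronecker hJr).kronecker (h1 _)
  · exact ((hcA1.kronecker hA1).kronecker hJr).kronecker hJs

theorem Ers_charpoly_eq_prod_diag (n r s : ℕ) :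
    (Ers n r s).charpoly = ∏ x, (X - C (Ers n r s x x)) :=
  charpoly_of_blockTriangular_of_injective (fun x y h => by simpa [Prod.ext_iff] using h)
    (Ers_blockTriangular n r s)

theorem Ers_apply_self (n r s : ℕ) (x : ((Fin 2 × Fin 2) × Fin (r + 1)) × Fin (s + 1)) :
    Ers n r s x x = (mconj (A1 n) ⊗ₖ A1 n) x.1.1 x.1.1 := by
  obtain ⟨⟨⟨a, b⟩, c⟩, d⟩ := x
  fin_cases a <;> fin_cases b <;> simp [Ers, mconj, Jplus, A0]

theorem prod_X_sub_C_diag_mconj_A1_kronecker_A1 (n : ℕ) :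
    ∏ p, (X - C ((mconj (A1 n) ⊗ₖ A1 n) p p)) =
      (X - C 1) ^ 2 * (X - C (ω n)) * (X - C (starRingEnd ℂ (ω n))) := by
  simp only [Fintype.prod_prod_type, Fin.prod_univ_two, kroneckerMap_apply, mconj, map_apply,
    A1_eq_diagonal, diagonal_apply_eq, cons_val_zero, cons_val_one, map_one, one_mul, mul_one,
    conj_ω_mul_ω]
  ring

theorem Ers_charpoly_general (n r s : ℕ) :
    (Ers n r s).charpoly =
      (X - C 1) ^ (2 * (r + 1) * (s + 1)) *
        (X - C (ω n)) ^ ((r + 1) * (s + 1)) *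
        (X - C (starRingEnd ℂ (ω n))) ^ ((r + 1) * (s + 1)) := by
  rw [Ers_charpoly_eq_prod_diag]
  simp only [Ers_apply_self]
  rw [Fintype.prod_comp_fst fun y : (Fin 2 × Fin 2) × Fin (r + 1) =>
      X - C ((mconj (A1 n) ⊗ₖ A1 n) y.1 y.1),
    Fintype.prod_comp_fst fun p => X - C ((mconj (A1 n) ⊗ₖ A1 n) p p),
    prod_X_sub_C_diag_mconj_A1_kronecker_A1, Fintype.card_fin, Fintype.card_fin, ← pow_mul,
    mul_pow, mul_pow, ← pow_mul, mul_assoc 2]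

/-- The spectrum of `E_{r,s}` is `{1, ω, ω̄}` with eigenvalue `1` of algebraic
multiplicity `2(r+1)(s+1)` and `ω`, `ω̄` each of algebraic multiplicity `(r+1)(s+1)`,
expressed via the characteristic polynomial. -/
theorem Ers_charpoly (n r s : ℕ) (hn : 0 < n) (hr : r ≤ n) (hs : s ≤ n) :
    (Ers n r s).charpoly =
      (X - C 1) ^ (2 * (r + 1) * (s + 1)) *
        (X - C (ω n)) ^ ((r + 1) * (s + 1)) *
        (X - C (starRingEnd ℂ (ω n))) ^ ((r + 1) * (s + 1)) :=
  Ers_charpoly_general n r s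
end

section
/- Let ℋ = (C^p)^{⊗n}, let 𝒞 ⊆ ℋ be a subspace of dimension K with orthonormal basis ψ_1,...,ψ_K, and let 𝒩(ρ) = Σ_j R_j ρ R_j† be a CPTP map (Σ_j R_j†R_j = I). Define ε_approx = max_{α,β} Σ_j |⟨ψ_α|R_j|ψ_β⟩ − δ_{αβ}⟨ψ_1|R_j|ψ_1⟩|². Then for any unit vector Ψ ∈ 𝒞 and any orthonormal basis (φ_α) of 𝒞 with φ_1 = Ψ, and any α ≠ β: ⟨φ_α|𝒩(|φ_β⟩⟨φ_β|)|φ_α⟩ ≤ K⁴ ε_approx. -/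
/-!
Expand `φ_α = Σ_γ c_{αγ} ψ_γ`. Then `⟨φ_α|R|φ_β⟩ = c_α^† M c_β` with `M_{γδ} = ⟨ψ_γ|R|ψ_δ⟩`, and
since `c_α^† c_β = ⟨φ_α|φ_β⟩ = 0` the matrix `M` may be replaced by the error matrix
`M - ⟨ψ_1|R|ψ_1⟩ · 1`. The coefficients have modulus at most one, so by Cauchy–Schwarz over the
`K²` index pairs `|⟨φ_α|R_j|φ_β⟩|² ≤ K² Σ_{γ,δ} |err_j(γ,δ)|²`; summing over `j` gives `K⁴ ε`.
-/

open Finset Matrix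
open scoped InnerProductSpace

section MatrixBounds

variable {ι R : Type*} [Fintype ι]

theorem dotProduct_sub_smul_one_mulVec_of_dotProduct_eq_zero [CommRing R] [DecidableEq ι]
    {a b : ι → R} (hab : a ⬝ᵥ b = 0) (M : Matrix ι ι R) (m : R) :
    a ⬝ᵥ ((M - m • 1) *ᵥ b) = a ⬝ᵥ (M *ᵥ b) := by
  rw [sub_mulVec, smul_mulVec, one_mulVec, dotProduct_sub, dotProduct_smul, hab, smul_zero,
    sub_zero]

theorem norm_dotProduct_mulVec_le_sum [NormedRing R] {a b : ι → R}
    (ha : ∀ γ, ‖a γ‖ ≤ 1) (hb : ∀ δ, ‖b δ‖ ≤ 1) (N : Matrix ι ι R) :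
    ‖a ⬝ᵥ (N *ᵥ b)‖ ≤ ∑ γ, ∑ δ, ‖N γ δ‖ := by
  refine (norm_sum_le _ _).trans (sum_le_sum fun γ _ => ?_)
  calc ‖a γ * (N *ᵥ b) γ‖ ≤ 1 * ‖(N *ᵥ b) γ‖ :=
        (norm_mul_le _ _).trans (mul_le_mul_of_nonneg_right (ha γ) (norm_nonneg _))
    _ ≤ ∑ δ, ‖N γ δ‖ := by
        rw [one_mul]
        refine (norm_sum_le _ _).trans (sum_le_sum fun δ _ => ?_)
        calc ‖N γ δ * b δ‖ ≤ ‖N γ δ‖ * 1 :=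
              (norm_mul_le _ _).trans (mul_le_mul_of_nonneg_left (hb δ) (norm_nonneg _))
          _ = ‖N γ δ‖ := mul_one _

theorem sq_sum_sum_le_card_sq_mul_sum_sum_sq (f : ι → ι → ℝ) :
    (∑ γ, ∑ δ, f γ δ) ^ 2 ≤ (Fintype.card ι : ℝ) ^ 2 * ∑ γ, ∑ δ, f γ δ ^ 2 := by
  have := sq_sum_le_card_mul_sum_sq (s := (univ : Finset (ι × ι))) (f := fun p => f p.1 p.2)
  simpa only [Fintype.sum_prod_type, card_univ, Fintype.card_prod, ← sq, Nat.cast_pow]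
    using this

theorem sum_norm_dotProduct_mulVec_sq_le [NormedRing R] {J : Type*} [Fintype J] {a b : ι → R}
    (ha : ∀ γ, ‖a γ‖ ≤ 1) (hb : ∀ δ, ‖b δ‖ ≤ 1) (N : J → Matrix ι ι R) {ε : ℝ}
    (hN : ∀ γ δ, ∑ j, ‖N j γ δ‖ ^ 2 ≤ ε) :
    ∑ j, ‖a ⬝ᵥ (N j *ᵥ b)‖ ^ 2 ≤ (Fintype.card ι : ℝ) ^ 4 * ε := by
  calc ∑ j, ‖a ⬝ᵥ (N j *ᵥ b)‖ ^ 2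
      ≤ ∑ j, (Fintype.card ι : ℝ) ^ 2 * ∑ γ, ∑ δ, ‖N j γ δ‖ ^ 2 :=
        sum_le_sum fun j _ => (pow_le_pow_left₀ (norm_nonneg _)
          (norm_dotProduct_mulVec_le_sum ha hb (N j)) 2).trans
          (sq_sum_sum_le_card_sq_mul_sum_sum_sq _)
    _ = (Fintype.card ι : ℝ) ^ 2 * ∑ γ, ∑ δ, ∑ j, ‖N j γ δ‖ ^ 2 := by
        rw [← mul_sum, sum_comm]
        simp only [sum_comm (γ := J)]
    _ ≤ (Fintype.card ι : ℝ) ^ 2 * ∑ _γ : ι, ∑ _δ : ι, ε := by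
        gcongr with γ _ δ _
        exact hN γ δ
    _ = (Fintype.card ι : ℝ) ^ 4 * ε := by
        simp only [sum_const, card_univ, nsmul_eq_mul]
        ring

end MatrixBounds

section InnerProduct

variable {𝕜 E ι : Type*} [RCLike 𝕜] [NormedAddCommGroup E] [InnerProductSpace 𝕜 E] [Fintype ι]

variable (𝕜) in
def compressionMatrix (ψ : ι → E) (T : E → E) : Matrix ι ι 𝕜 :=
  of fun γ δ => ⟪ψ γ, T (ψ δ)⟫_𝕜

theorem inner_sum_smul_map_sum_smul {F : Type*} [FunLike F E E] [LinearMapClass F 𝕜 E E] (T : F)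
    (ψ : ι → E) (a b : ι → 𝕜) :
    ⟪∑ γ, a γ • ψ γ, T (∑ δ, b δ • ψ δ)⟫_𝕜 = star a ⬝ᵥ (compressionMatrix 𝕜 ψ T *ᵥ b) := by
  simp only [map_sum, map_smul, sum_inner, inner_sum, inner_smul_left, inner_smul_right,
    dotProduct, mulVec, compressionMatrix, of_apply, Pi.star_apply, RCLike.star_def, mul_sum]
  rw [sum_comm]
  exact sum_congr rfl fun γ _ => sum_congr rfl fun δ _ => by ring

theorem Orthonormal.sum_inner_smul_eq_of_mem_span {ψ : ι → E} (hψ : Orthonormal 𝕜 ψ) {x : E}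
    (hx : x ∈ Submodule.span 𝕜 (Set.range ψ)) :
    ∑ γ, ⟪ψ γ, x⟫_𝕜 • ψ γ = x := by
  obtain ⟨c, rfl⟩ := (Submodule.mem_span_range_iff_exists_fun 𝕜).mp hx
  simp only [hψ.inner_right_fintype]

end InnerProduct

theorem approx_KL_offdiagonal_general (Nd J K : ℕ) (hK : 0 < K)
    (ψ : Fin K → EuclideanSpace ℂ (Fin Nd)) (hψ : Orthonormal ℂ ψ)
    (R : Fin J → (EuclideanSpace ℂ (Fin Nd) →L[ℂ] EuclideanSpace ℂ (Fin Nd)))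
    (ε : ℝ)
    (hε : ε = ⨆ α : Fin K, ⨆ β : Fin K, ∑ j,
      ‖(inner ℂ (ψ α) (R j (ψ β)) : ℂ) -
        (if α = β then (inner ℂ (ψ ⟨0, hK⟩) (R j (ψ ⟨0, hK⟩)) : ℂ) else 0)‖ ^ 2)
    (φ : Fin K → EuclideanSpace ℂ (Fin Nd)) (hφ : Orthonormal ℂ φ)
    (hφspan : Submodule.span ℂ (Set.range φ) = Submodule.span ℂ (Set.range ψ))
    (α β : Fin K) (hαβ : α ≠ β) :
    ∑ j, ‖(inner ℂ (φ α) (R j (φ β)) : ℂ)‖ ^ 2 ≤ (K : ℝ) ^ 4 * ε := by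
  set c : Fin K → Fin K → ℂ := fun a γ => ⟪ψ γ, φ a⟫_ℂ
  have hφ_eq a : ∑ γ, c a γ • ψ γ = φ a :=
    hψ.sum_inner_smul_eq_of_mem_span (hφspan ▸ Submodule.subset_span ⟨a, rfl⟩)
  have hc a γ : ‖c a γ‖ ≤ 1 :=
    (norm_inner_le_norm _ _).trans_eq (by rw [hψ.1 γ, hφ.1 a, one_mul])
  have horth : star (c α) ⬝ᵥ c β = 0 := by
    rw [← hφ.2 hαβ, ← hφ_eq α, ← hφ_eq β, hψ.inner_sum]
    rfl
  set err : Fin J → Matrix (Fin K) (Fin K) ℂ := fun j =>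
    compressionMatrix ℂ ψ (R j) - ⟪ψ ⟨0, hK⟩, R j (ψ ⟨0, hK⟩)⟫_ℂ • 1
  have herr γ δ : ∑ j, ‖err j γ δ‖ ^ 2 ≤ ε := by
    rw [hε]
    refine le_ciSup_of_le (Set.finite_range _).bddAbove γ
      (le_ciSup_of_le (Set.finite_range _).bddAbove δ (le_of_eq ?_))
    simp [err, compressionMatrix, one_apply]
  have hentry j : ⟪φ α, R j (φ β)⟫_ℂ = star (c α) ⬝ᵥ (err j *ᵥ c β) := by
    rw [dotProduct_sub_smul_one_mulVec_of_dotProduct_eq_zero horth, ← hφ_eq α, ← hφ_eq β,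
      inner_sum_smul_map_sum_smul]
  simp only [hentry]
  simpa only [Fintype.card_fin] using sum_norm_dotProduct_mulVec_sq_le (a := star (c α))
    (fun γ => (norm_star (c α γ)).trans_le (hc α γ)) (hc β) err herr

/-- Approximate Knill–Laflamme estimate: if `ψ` is an orthonormal basis of the code
space `𝒞`, `𝒩(ρ) = Σ_j R_j ρ R_j†` is a CPTP map, and
`ε = max_{α,β} Σ_j |⟨ψ_α|R_j|ψ_β⟩ − δ_{αβ}⟨ψ_1|R_j|ψ_1⟩|²`, then for any unit vector
`Ψ ∈ 𝒞`, any orthonormal basis `φ` of `𝒞` with `φ_1 = Ψ`, and any `α ≠ β`: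
`⟨φ_α|𝒩(|φ_β⟩⟨φ_β|)|φ_α⟩ = Σ_j |⟨φ_α|R_j|φ_β⟩|² ≤ K⁴ ε`. -/
theorem approx_KL_offdiagonal (Nd J K : ℕ) (hK : 0 < K)
    (ψ : Fin K → EuclideanSpace ℂ (Fin Nd)) (hψ : Orthonormal ℂ ψ)
    (R : Fin J → (EuclideanSpace ℂ (Fin Nd) →L[ℂ] EuclideanSpace ℂ (Fin Nd)))
    (htp : ∑ j, (ContinuousLinearMap.adjoint (R j)).comp (R j) =
      ContinuousLinearMap.id ℂ (EuclideanSpace ℂ (Fin Nd)))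
    (ε : ℝ)
    (hε : ε = ⨆ α : Fin K, ⨆ β : Fin K, ∑ j,
      ‖(inner ℂ (ψ α) (R j (ψ β)) : ℂ) -
        (if α = β then (inner ℂ (ψ ⟨0, hK⟩) (R j (ψ ⟨0, hK⟩)) : ℂ) else 0)‖ ^ 2)
    (Ψ : EuclideanSpace ℂ (Fin Nd)) (hΨ : ‖Ψ‖ = 1)
    (hΨmem : Ψ ∈ Submodule.span ℂ (Set.range ψ))
    (φ : Fin K → EuclideanSpace ℂ (Fin Nd)) (hφ : Orthonormal ℂ φ)
    (hφspan : Submodule.span ℂ (Set.range φ) = Submodule.span ℂ (Set.range ψ))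
    (hφ1 : φ ⟨0, hK⟩ = Ψ)
    (α β : Fin K) (hαβ : α ≠ β) :
    ∑ j, ‖(inner ℂ (φ α) (R j (φ β)) : ℂ)‖ ^ 2 ≤ (K : ℝ) ^ 4 * ε :=
  approx_KL_offdiagonal_general Nd J K hK ψ hψ R ε hε φ hφ hφspan α β hαβ
end

section
/- Let n ≥ 2 and ω = exp(2πi/n). The one-magnon state |Ψ⟩ = ω̄ Σ_{r=1}^n ω^r σ_r^−|1⟩^{⊗n} equals the matrix product state Σ_{i_1,...,i_n ∈ {0,1}} tr(A_{i_1}···A_{i_n} X)|i_1···i_n⟩ with A_0 = |1⟩⟨0|, A_1 = |0⟩⟨0| + ω|1⟩⟨1|, and X = |0⟩⟨1|. -/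
/-- The one-magnon state `|Ψ⟩ = ω̄ Σ_{r=1}^n ω^r σ_r⁻ |1⟩^{⊗n}`: the coefficient of the
basis state with a single `0` at (`0`-based) site `r` is `ω^r`. -/
noncomputable def magnonPsi (n : ℕ) : (Fin n → Fin 2) → ℂ := fun x =>
  ∑ r : Fin n,
    ω n ^ (r : ℕ) * (if x = Function.update (fun _ => 1) r 0 then 1 else 0)

/-- The MPS tensors `A₀ = |1⟩⟨0|`, `A₁ = |0⟩⟨0| + ω|1⟩⟨1|`. -/
noncomputable def mpsA (n : ℕ) : Fin 2 → Matrix (Fin 2) (Fin 2) ℂ :=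
  ![!![0, 0; 1, 0], !![1, 0; 0, ω n]]

/-- The boundary matrix `X = |0⟩⟨1|`. -/
def mpsX : Matrix (Fin 2) (Fin 2) ℂ := !![0, 1; 0, 0]

namespace Fin

variable {α : Type*} {n : ℕ}

theorem cons_const (a : α) : (cons a fun _ : Fin n => a) = fun _ => a := by
  ext i
  cases i using Fin.cases <;> rfl

theorem update_const_zero (a b : α) :
    Function.update (fun _ : Fin (n + 1) => a) 0 b = cons b fun _ => a := by
  simpa only [cons_const] using
    update_cons_zero (α := fun _ => α) (z := b) (x := a) (p := fun _ : Fin n => a)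

theorem update_const_succ (a b : α) (i : Fin n) :
    Function.update (fun _ : Fin (n + 1) => a) i.succ b =
      cons a (Function.update (fun _ => a) i b) := by
  rw [cons_update, cons_const]

end Fin

section Magnon

variable {R : Type*} [Semiring R] {n : ℕ}

def magnonTensor (c : R) : Fin 2 → Matrix (Fin 2) (Fin 2) R :=
  ![!![0, 0; 1, 0], !![1, 0; 0, c]]

@[simp] theorem magnonTensor_zero (c : R) : magnonTensor c 0 = !![0, 0; 1, 0] := rfl

@[simp] theorem magnonTensor_one (c : R) : magnonTensor c 1 = !![1, 0; 0, c] := rfl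

def magnonAmplitude (c : R) : (Fin n → Fin 2) → R := fun x =>
  ∑ r : Fin n, c ^ (r : ℕ) * if x = Function.update (fun _ => 1) r 0 then 1 else 0

theorem magnonAmplitude_cons_zero (c : R) (w : Fin n → Fin 2) :
    magnonAmplitude c (Fin.cons 0 w) = if ∀ i, w i = 1 then 1 else 0 := by
  simp only [magnonAmplitude, Fin.sum_univ_succ, Fin.update_const_zero, Fin.update_const_succ,
    Fin.cons_inj]
  simp [funext_iff]

theorem magnonAmplitude_cons_one (c : R) (w : Fin n → Fin 2) :
    magnonAmplitude c (Fin.cons 1 w) = c * magnonAmplitude c w := by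
  simp only [magnonAmplitude, Fin.sum_univ_succ, Fin.update_const_zero, Fin.update_const_succ,
    Fin.cons_inj]
  simp [Finset.mul_sum, pow_succ']

theorem prod_magnonTensor_zero_zero (c : R) (x : Fin n → Fin 2) :
    (List.ofFn fun k => magnonTensor c (x k)).prod 0 0 = if ∀ i, x i = 1 then 1 else 0 := by
  induction x using Fin.consInduction with
  | elim0 => simp
  | cons a w ih =>
    simp only [List.ofFn_succ, List.prod_cons, Fin.cons_zero, Fin.cons_succ, Matrix.mul_apply,
      Fin.sum_univ_two]
    fin_cases a <;> simp [ih, Fin.forall_fin_succ]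

theorem prod_magnonTensor_one_zero (c : R) (x : Fin n → Fin 2) :
    (List.ofFn fun k => magnonTensor c (x k)).prod 1 0 = magnonAmplitude c x := by
  induction x using Fin.consInduction with
  | elim0 => simp [magnonAmplitude]
  | cons a w ih =>
    simp only [List.ofFn_succ, List.prod_cons, Fin.cons_zero, Fin.cons_succ, Matrix.mul_apply,
      Fin.sum_univ_two]
    fin_cases a <;> simp [ih, magnonAmplitude_cons_zero, magnonAmplitude_cons_one,
      prod_magnonTensor_zero_zero]

end Magnon

theorem mpsA_eq_magnonTensor (n : ℕ) : mpsA n = magnonTensor (ω n) := rfl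

theorem magnonPsi_eq_magnonAmplitude (n : ℕ) : magnonPsi n = magnonAmplitude (ω n) := rfl

theorem trace_mul_mpsX (M : Matrix (Fin 2) (Fin 2) ℂ) : (M * mpsX).trace = M 1 0 := by
  simp [Matrix.trace, Matrix.mul_apply, mpsX, Fin.sum_univ_two]

theorem magnon_eq_mps_general (n : ℕ) :
    (fun x : Fin n → Fin 2 =>
        Matrix.trace ((List.ofFn fun k : Fin n => mpsA n (x k)).prod * mpsX)) =
      magnonPsi n := by
  funext x
  rw [trace_mul_mpsX, mpsA_eq_magnonTensor, prod_magnonTensor_one_zero,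
    magnonPsi_eq_magnonAmplitude]

/-- The one-magnon state equals the bond-dimension-2 matrix product state
`Σ_{i₁,…,i_n} tr(A_{i₁}⋯A_{i_n} X)|i₁⋯i_n⟩` with `A₀ = |1⟩⟨0|`,
`A₁ = |0⟩⟨0| + ω|1⟩⟨1|`, and `X = |0⟩⟨1|`. -/
theorem magnon_eq_mps (n : ℕ) (hn : 2 ≤ n) :
    (fun x : Fin n → Fin 2 =>
        Matrix.trace ((List.ofFn fun k : Fin n => mpsA n (x k)).prod * mpsX)) =
      magnonPsi n :=
  magnon_eq_mps_general n
end
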